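/- Let V=(Q,Δ,w) be a 1-VASS, p,q ∈ Q, and k ∈ ℕ. Every set P of p-q paths, each of length at most k, has a Pareto set P' of cardinality at most |Q| consisting of p-q paths each of length at most 2k (the paths in P' need not belong to P). -/

import Mathlib

/-!
Split a path at a position where its prefix minimum is attained. The first part `α` ends at
its minimum (`pmin α = weight α`), the second part `β` never drops below its start
(`pmin β = 0`), and then `pmin` of the path is the weight of `α` while `smax` of the path is
`smax β`. Hence, among the finitely many such parts meeting at a state `s`, concatenating an `α`
of maximal weight with a `β` of maximal `smax` dominates every path split at `s`: one path of
length at most `2k` per state suffices.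
-/

namespace VASSPaper

/-- A 1-VASS (without tests): states `Q`, transition relation `delta`, integer weights `w`. -/
structure VASS (Q : Type) where
  delta : Q → Q → Prop
  w : Q → Q → ℤ

variable {Q : Type}

/-- A path is a nonempty sequence of states joined by transitions. -/
def IsPath (V : VASS Q) : List Q → Prop
  | [] => False
  | [_] => True
  | a :: b :: l => V.delta a b ∧ IsPath V (b :: l)

/-- The weight of a path: the sum of the weights of its transitions. -/
def pathWeight (V : VASS Q) (π : List Q) : ℤ :=
  (List.zipWith V.w π π.tail).sum

/-- The counter value at position `i` of the run over `π` starting with counter `z`. -/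
def counterAt (V : VASS Q) (z : ℕ) (π : List Q) (i : ℕ) : ℤ :=
  (z : ℤ) + pathWeight V (π.take (i + 1))

/-- `π` lifts to a run from counter value `z`: all counter values stay nonnegative. -/
def IsRun (V : VASS Q) (π : List Q) (z : ℕ) : Prop :=
  IsPath V π ∧ ∀ i, i < π.length → 0 ≤ counterAt V z π i

/-- `π` goes from configuration `c` to configuration `c'`. -/
def RunFromTo (V : VASS Q) (π : List Q) (c c' : Q × ℕ) : Prop :=
  π.head? = some c.1 ∧ π.getLast? = some c'.1 ∧ (c'.2 : ℤ) = (c.2 : ℤ) + pathWeight V π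

/-- `c'` is reachable from `c` (in a 1-VASS without tests every run is valid). -/
def Reaches (V : VASS Q) (c c' : Q × ℕ) : Prop :=
  ∃ π, IsRun V π c.2 ∧ RunFromTo V π c c'

/-- A configuration is unbounded if infinitely many configurations are reachable from it. -/
def Unbounded (V : VASS Q) (c : Q × ℕ) : Prop :=
  {c' | Reaches V c c'}.Infinite

/-- The minimum weight of a (possibly empty) prefix of `π`. -/
def pmin (V : VASS Q) (π : List Q) : ℤ :=
  ((List.range (π.length + 1)).map fun i => pathWeight V (π.take i)).foldr min 0

/-- The maximum weight of a (possibly empty) suffix of `π`. -/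
def smax (V : VASS Q) (π : List Q) : ℤ :=
  ((List.range (π.length + 1)).map fun i => pathWeight V (π.drop i)).foldr max 0

/-- A cycle on `q`: a path with at least one transition starting and ending at `q`. -/
def IsCycleOn (V : VASS Q) (π : List Q) (q : Q) : Prop :=
  IsPath V π ∧ 2 ≤ π.length ∧ π.head? = some q ∧ π.getLast? = some q

/-- A simple cycle on `q`. -/
def IsSimpleCycleOn (V : VASS Q) (π : List Q) (q : Q) : Prop :=
  IsCycleOn V π q ∧ π.dropLast.Nodup

/-- `π` is dominated by `π'` (paths with the same first and last states). -/
def Dominated (V : VASS Q) (π π' : List Q) : Prop :=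
  π.head? = π'.head? ∧ π.getLast? = π'.getLast? ∧
    pmin V π ≤ pmin V π' ∧ smax V π ≤ smax V π'

/-- `π` is a path from `p` to `q`. -/
def IsPQPath (V : VASS Q) (p q : Q) (π : List Q) : Prop :=
  IsPath V π ∧ π.head? = some p ∧ π.getLast? = some q

/-- `P'` is a Pareto set for `P`: every path of `P` is dominated by some path of `P'`. -/
def ParetoFor (V : VASS Q) (P' P : Set (List Q)) : Prop :=
  ∀ π ∈ P, ∃ π' ∈ P', Dominated V π π'

/-- Concatenation of a `p`-`q` path and a `q`-`r` path, identifying the shared state. -/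
def pathConcat (π π' : List Q) : List Q := π ++ π'.tail

theorem le_foldr_min_iff {α : Type*} [LinearOrder α] {x b : α} {l : List α} :
    x ≤ l.foldr min b ↔ x ≤ b ∧ ∀ y ∈ l, x ≤ y := by
  induction l with
  | nil => simp
  | cons a l ih => simp only [List.foldr_cons, le_min_iff, ih, List.forall_mem_cons]; tauto

theorem foldr_max_le_iff {α : Type*} [LinearOrder α] {x b : α} {l : List α} :
    l.foldr max b ≤ x ↔ b ≤ x ∧ ∀ y ∈ l, y ≤ x := by
  induction l with
  | nil => simp
  | cons a l ih => simp only [List.foldr_cons, max_le_iff, ih, List.forall_mem_cons]; tauto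

variable (V : VASS Q)

theorem pathWeight_cons_cons (a b : Q) (l : List Q) :
    pathWeight V (a :: b :: l) = V.w a b + pathWeight V (b :: l) := by
  simp [pathWeight]

theorem pathWeight_cons {a b : Q} {l : List Q} (hl : l.head? = some b) :
    pathWeight V (a :: l) = V.w a b + pathWeight V l := by
  obtain ⟨l, rfl⟩ := List.head?_eq_some_iff.1 hl
  exact pathWeight_cons_cons V a b l

@[simp]
theorem pathWeight_nil : pathWeight V [] = 0 := rfl

@[simp]
theorem pathWeight_singleton (a : Q) : pathWeight V [a] = 0 := rfl

theorem le_pmin_iff {π : List Q} {x : ℤ} :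
    x ≤ pmin V π ↔ ∀ i ≤ π.length, x ≤ pathWeight V (π.take i) := by
  simp only [pmin, le_foldr_min_iff, List.forall_mem_map, List.mem_range, Nat.lt_succ_iff]
  exact ⟨fun h => h.2, fun h => ⟨by simpa using h 0 (Nat.zero_le _), h⟩⟩

theorem smax_le_iff {π : List Q} {x : ℤ} :
    smax V π ≤ x ↔ ∀ i ≤ π.length, pathWeight V (π.drop i) ≤ x := by
  simp only [smax, foldr_max_le_iff, List.forall_mem_map, List.mem_range, Nat.lt_succ_iff]
  refine ⟨fun h => h.2, fun h => ⟨?_, h⟩⟩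
  simpa using h π.length le_rfl

theorem pmin_nonpos (π : List Q) : pmin V π ≤ 0 := by
  simpa using (le_pmin_iff V).1 le_rfl 0 (Nat.zero_le _)

theorem pmin_le_pathWeight (π : List Q) : pmin V π ≤ pathWeight V π := by
  simpa using (le_pmin_iff V).1 le_rfl π.length le_rfl

theorem pathWeight_le_smax (π : List Q) : pathWeight V π ≤ smax V π := by
  simpa using (smax_le_iff V).1 le_rfl 0 (Nat.zero_le _)

@[simp]
theorem pmin_singleton (a : Q) : pmin V [a] = 0 := rfl

@[simp]
theorem smax_singleton (a : Q) : smax V [a] = 0 := rfl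

theorem pmin_cons {a b : Q} {l : List Q} (hl : l.head? = some b) :
    pmin V (a :: l) = min 0 (V.w a b + pmin V l) := by
  obtain ⟨l, rfl⟩ := List.head?_eq_some_iff.1 hl
  refine eq_of_forall_le_iff fun x => ?_
  have hle : x ≤ V.w a b + pmin V (b :: l) ↔ x - V.w a b ≤ pmin V (b :: l) := by omega
  rw [le_min_iff, hle, le_pmin_iff, le_pmin_iff]
  constructor
  · intro h
    refine ⟨by simpa using h 0 (by simp), fun i hi => ?_⟩
    rcases i with _ | i
    · have := h 2 (by simp)
      simp only [List.take_succ_cons, List.take_zero, pathWeight_cons_cons,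
        pathWeight_singleton] at this
      simp only [List.take_zero, pathWeight_nil]
      omega
    · have := h (i + 2) (by simp at hi ⊢; omega)
      simp only [List.take_succ_cons, pathWeight_cons_cons] at this ⊢
      omega
  · rintro ⟨h0, h⟩ i hi
    match i, hi with
    | 0, _ => simpa using h0
    | 1, _ => simpa using h0
    | i + 2, hi =>
      have := h (i + 1) (by simp at hi ⊢; omega)
      simp only [List.take_succ_cons, pathWeight_cons_cons] at this ⊢
      omega

theorem smax_cons (a : Q) (l : List Q) :
    smax V (a :: l) = max (pathWeight V (a :: l)) (smax V l) := by
  refine eq_of_forall_ge_iff fun x => ?_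
  rw [max_le_iff, smax_le_iff, smax_le_iff]
  constructor
  · intro h
    exact ⟨h 0 (Nat.zero_le _), fun i hi => h (i + 1) (by simp at hi ⊢; omega)⟩
  · rintro ⟨h0, h⟩ i hi
    rcases i with _ | i
    · exact h0
    · exact h i (by simp at hi ⊢; omega)

section pathConcat

variable {V} {s : Q}

theorem pathConcat_singleton {a : Q} {β : List Q} (hα : [a].getLast? = some s)
    (hβ : β.head? = some s) : pathConcat [a] β = β := by
  obtain rfl : a = s := by simpa using hα
  cases β <;> simp_all [pathConcat]

theorem pathConcat_cons (a : Q) (t β : List Q) :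
    pathConcat (a :: t) β = a :: pathConcat t β := rfl

theorem length_pathConcat {α β : List Q} (hβ : β.head? = some s) :
    (pathConcat α β).length + 1 = α.length + β.length := by
  cases β <;> simp_all [pathConcat]; omega

theorem head?_pathConcat {α : List Q} (β : List Q) (hα : α ≠ []) :
    (pathConcat α β).head? = α.head? := by
  cases α <;> simp_all [pathConcat]

theorem getLast?_pathConcat {α β : List Q} (hα : α.getLast? = some s)
    (hβ : β.head? = some s) : (pathConcat α β).getLast? = β.getLast? := by
  obtain ⟨t, rfl⟩ := List.head?_eq_some_iff.1 hβ
  cases t <;> simp_all [pathConcat, List.getLast?_append, List.getLast?_cons]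

theorem isPath_pathConcat : ∀ {α β : List Q}, IsPath V α → IsPath V β →
    α.getLast? = some s → β.head? = some s → IsPath V (pathConcat α β)
  | [], _, hα, _, _, _ => hα.elim
  | [_], _, _, hβ, hαs, hβs => by rwa [pathConcat_singleton hαs hβs]
  | _ :: _ :: _, _, hα, hβ, hαs, hβs =>
    ⟨hα.1, isPath_pathConcat hα.2 hβ (by simpa using hαs) hβs⟩

theorem pathWeight_pathConcat : ∀ {α β : List Q}, α.getLast? = some s → β.head? = some s →
    pathWeight V (pathConcat α β) = pathWeight V α + pathWeight V β
  | [], _, hα, _ => by simp at hα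
  | [_], _, hα, hβ => by simp [pathConcat_singleton hα hβ]
  | a :: b :: t, β, hα, hβ => by
    have hb : (pathConcat (b :: t) β).head? = some b := head?_pathConcat β (by simp)
    rw [pathConcat_cons, pathWeight_cons V hb, pathWeight_cons_cons,
      pathWeight_pathConcat (by simpa using hα) hβ]
    ring

theorem pmin_pathConcat : ∀ {α β : List Q}, α.getLast? = some s → β.head? = some s →
    pmin V (pathConcat α β) = min (pmin V α) (pathWeight V α + pmin V β)
  | [], _, hα, _ => by simp at hα
  | [_], _, hα, hβ => by simp [pathConcat_singleton hα hβ, pmin_nonpos]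
  | a :: b :: t, β, hα, hβ => by
    have hb : (pathConcat (b :: t) β).head? = some b := head?_pathConcat β (by simp)
    rw [pathConcat_cons, pmin_cons V hb, pmin_cons V rfl, pathWeight_cons_cons,
      pmin_pathConcat (by simpa using hα) hβ]
    omega

theorem smax_pathConcat : ∀ {α β : List Q}, α.getLast? = some s → β.head? = some s →
    smax V (pathConcat α β) = max (smax V β) (pathWeight V β + smax V α)
  | [], _, hα, _ => by simp at hα
  | [_], _, hα, hβ => by simp [pathConcat_singleton hα hβ, pathWeight_le_smax]
  | a :: b :: t, β, hα, hβ => by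
    have hαt : (b :: t).getLast? = some s := by simpa using hα
    rw [pathConcat_cons, smax_cons, smax_cons,
      ← pathConcat_cons, pathWeight_pathConcat hα hβ, smax_pathConcat hαt hβ]
    omega

theorem smax_eq_zero_of_pmin_eq_pathWeight : ∀ {α : List Q},
    pmin V α = pathWeight V α → smax V α = 0
  | [], _ => rfl
  | [_], _ => rfl
  | a :: b :: t, h => by
    rw [pmin_cons V rfl, pathWeight_cons_cons] at h
    have hle := pmin_le_pathWeight V (b :: t)
    have ih := smax_eq_zero_of_pmin_eq_pathWeight (α := b :: t) (by omega)
    rw [smax_cons, ih, pathWeight_cons_cons]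
    omega

theorem pmin_pathConcat_of_pmin_eq {α β : List Q} (hα : α.getLast? = some s)
    (hβ : β.head? = some s) (hαmin : pmin V α = pathWeight V α) (hβmin : pmin V β = 0) :
    pmin V (pathConcat α β) = pathWeight V α := by
  rw [pmin_pathConcat hα hβ, hαmin, hβmin]
  omega

theorem smax_pathConcat_of_pmin_eq {α β : List Q} (hα : α.getLast? = some s)
    (hβ : β.head? = some s) (hαmin : pmin V α = pathWeight V α) :
    smax V (pathConcat α β) = smax V β := by
  rw [smax_pathConcat hα hβ, smax_eq_zero_of_pmin_eq_pathWeight hαmin]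
  have := pathWeight_le_smax V β
  omega

theorem exists_split_at_pmin : ∀ {π : List Q}, IsPath V π →
    ∃ s α β, IsPath V α ∧ IsPath V β ∧ α.getLast? = some s ∧ β.head? = some s ∧
      pathConcat α β = π ∧ pmin V α = pathWeight V α ∧ pmin V β = 0
  | [], h => h.elim
  | [a], _ => ⟨a, [a], [a], trivial, trivial, rfl, rfl, rfl, rfl, rfl⟩
  | a :: b :: l, h => by
    obtain ⟨s, α, β, hαP, hβP, hαs, hβs, hsplit, hαmin, hβmin⟩ := exists_split_at_pmin h.2
    have hαb : α.head? = some b := by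
      rw [← head?_pathConcat β (by rintro rfl; simp at hαs), hsplit]; rfl
    by_cases hneg : V.w a b + pathWeight V α ≤ 0
    · refine ⟨s, a :: α, β, ?_, hβP, by simp [List.getLast?_cons, hαs], hβs,
        by rw [pathConcat_cons, hsplit], ?_, hβmin⟩
      · obtain ⟨t, rfl⟩ := List.head?_eq_some_iff.1 hαb
        exact ⟨h.1, hαP⟩
      · rw [pmin_cons V hαb, pathWeight_cons V hαb, hαmin]
        omega
    · refine ⟨a, [a], a :: b :: l, trivial, h, rfl, rfl, rfl, rfl, ?_⟩
      rw [pmin_cons V rfl, ← hsplit, pmin_pathConcat_of_pmin_eq hαs hβs hαmin hβmin]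
      omega

theorem isPQPath_pathConcat {p q : Q} {α β : List Q} (hα : IsPQPath V p s α)
    (hβ : IsPQPath V s q β) : IsPQPath V p q (pathConcat α β) :=
  ⟨isPath_pathConcat hα.1 hβ.1 hα.2.2 hβ.2.1,
    by rw [head?_pathConcat β (by rintro rfl; exact hα.1), hα.2.1],
    by rw [getLast?_pathConcat hα.2.2 hβ.2.1, hβ.2.2]⟩

end pathConcat

def pathsEndingAtMin (p s : Q) (n : ℕ) : Set (List Q) :=
  {α | IsPQPath V p s α ∧ α.length ≤ n ∧ pmin V α = pathWeight V α}

def pathsAboveStart (s q : Q) (n : ℕ) : Set (List Q) :=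
  {β | IsPQPath V s q β ∧ β.length ≤ n ∧ pmin V β = 0}

variable {V}

theorem exists_pathConcat_eq_of_isPQPath {p q : Q} {n : ℕ} {π : List Q}
    (hπ : IsPQPath V p q π) (hn : π.length ≤ n) :
    ∃ s, ∃ α ∈ pathsEndingAtMin V p s n, ∃ β ∈ pathsAboveStart V s q n, pathConcat α β = π := by
  obtain ⟨s, α, β, hαP, hβP, hαs, hβs, rfl, hαmin, hβmin⟩ := exists_split_at_pmin hπ.1
  have hlen := length_pathConcat (α := α) hβs
  have hα0 : α ≠ [] := by rintro rfl; simp at hαs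
  have hβ0 : β ≠ [] := by rintro rfl; simp at hβs
  have := List.length_pos_iff.2 hα0
  have := List.length_pos_iff.2 hβ0
  refine ⟨s, α, ⟨⟨hαP, ?_, hαs⟩, by omega, hαmin⟩, β, ⟨⟨hβP, hβs, ?_⟩, by omega, hβmin⟩, rfl⟩
  · rw [← head?_pathConcat β hα0, hπ.2.1]
  · rw [← getLast?_pathConcat hαs hβs, hπ.2.2]

theorem dominated_pathConcat {p q s : Q} {n : ℕ} {α α' β β' : List Q}
    (hα : α ∈ pathsEndingAtMin V p s n) (hα' : α' ∈ pathsEndingAtMin V p s n)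
    (hβ : β ∈ pathsAboveStart V s q n) (hβ' : β' ∈ pathsAboveStart V s q n)
    (hw : pathWeight V α ≤ pathWeight V α') (hs : smax V β ≤ smax V β') :
    Dominated V (pathConcat α β) (pathConcat α' β') := by
  have hγ := isPQPath_pathConcat hα.1 hβ.1
  have hγ' := isPQPath_pathConcat hα'.1 hβ'.1
  refine ⟨by rw [hγ.2.1, hγ'.2.1], by rw [hγ.2.2, hγ'.2.2], ?_, ?_⟩
  · rwa [pmin_pathConcat_of_pmin_eq hα.1.2.2 hβ.1.2.1 hα.2.2 hβ.2.2,
      pmin_pathConcat_of_pmin_eq hα'.1.2.2 hβ'.1.2.1 hα'.2.2 hβ'.2.2]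
  · rwa [smax_pathConcat_of_pmin_eq hα.1.2.2 hβ.1.2.1 hα.2.2,
      smax_pathConcat_of_pmin_eq hα'.1.2.2 hβ'.1.2.1 hα'.2.2]

theorem exists_dominating_pathConcat [Finite Q] {p q s : Q} {n : ℕ}
    (hA : (pathsEndingAtMin V p s n).Nonempty) (hB : (pathsAboveStart V s q n).Nonempty) :
    ∃ α ∈ pathsEndingAtMin V p s n, ∃ β ∈ pathsAboveStart V s q n,
      ∀ α' ∈ pathsEndingAtMin V p s n, ∀ β' ∈ pathsAboveStart V s q n,
        Dominated V (pathConcat α' β') (pathConcat α β) := by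
  have hfin := List.finite_length_le Q n
  obtain ⟨α, hα, hαmax⟩ := Set.exists_max_image _ (pathWeight V) (hfin.subset fun _ h => h.2.1) hA
  obtain ⟨β, hβ, hβmax⟩ := Set.exists_max_image _ (smax V) (hfin.subset fun _ h => h.2.1) hB
  exact ⟨α, hα, β, hβ, fun α' hα' β' hβ' =>
    dominated_pathConcat hα' hα hβ' hβ (hαmax α' hα') (hβmax β' hβ')⟩

/-- Proposition 12: every set of `p`-`q` paths of length at most `k` has a
Pareto set of at most `|Q|` paths from `p` to `q`, each of length at most `2k`. -/
theorem pareto_set_small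
    {Q : Type} [Fintype Q] (V : VASS Q) (p q : Q) (k : ℕ) (P : Set (List Q))
    (hP : ∀ π ∈ P, IsPQPath V p q π ∧ π.length ≤ k + 1) :
    ∃ P' : Set (List Q),
      ParetoFor V P' P ∧
      (∀ π ∈ P', IsPQPath V p q π ∧ π.length ≤ 2 * k + 1) ∧
      P'.Finite ∧ P'.ncard ≤ Fintype.card Q := by
  choose! α hα β hβ hdom using fun s => exists_dominating_pathConcat (V := V) (p := p) (q := q)
    (s := s) (n := k + 1)
  set D := {s | (pathsEndingAtMin V p s (k + 1)).Nonempty ∧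
    (pathsAboveStart V s q (k + 1)).Nonempty}
  refine ⟨(fun s => pathConcat (α s) (β s)) '' D, ?_, ?_, D.toFinite.image _, ?_⟩
  · intro π hπ
    obtain ⟨s, α₀, hα₀, β₀, hβ₀, rfl⟩ := exists_pathConcat_eq_of_isPQPath (hP π hπ).1 (hP π hπ).2
    have hs : s ∈ D := ⟨⟨α₀, hα₀⟩, β₀, hβ₀⟩
    exact ⟨_, ⟨s, hs, rfl⟩, hdom s hs.1 hs.2 α₀ hα₀ β₀ hβ₀⟩
  · rintro _ ⟨s, ⟨hA, hB⟩, rfl⟩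
    dsimp only
    obtain ⟨hαP, hαlen, -⟩ := hα s hA hB
    obtain ⟨hβP, hβlen, -⟩ := hβ s hA hB
    have := length_pathConcat (α := α s) hβP.2.1
    exact ⟨isPQPath_pathConcat hαP hβP, by omega⟩
  · calc ((fun s => pathConcat (α s) (β s)) '' D).ncard ≤ D.ncard := Set.ncard_image_le
      _ ≤ Nat.card Q := Set.ncard_le_card D
      _ = Fintype.card Q := Nat.card_eq_fintype_card

end VASSPaper
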